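/- arXiv:1807.05032 — 4 statements merged into one kernel-verified Lean document; each statement's English description precedes it below -/
import Mathlib

section
/- Every rational-valued class function on S_m can be written as a polynomial with rational coefficients in the cycle-counting functions X₁,...,X_{m−1}; i.e., the algebra homomorphism ρ_m : ℚ[X₁,...,X_{m−1}] → Q_cl(S_m) sending X_i to (g ↦ X_i(g)) is surjective. -/
/-!
The numbers of `i`-cycles for `1 ≤ i < m` determine the conjugacy class of a permutation of
`Fin m`: the cycle lengths, fixed points included, form a partition of `m`, so the one missing
count, that of `m`-cycles, is recovered from the sum. A class function therefore factors through
the vector of cycle counts, and every function on a finite subset of `ℚⁿ` is the restriction of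
a polynomial, namely a combination of products of linear forms separating the points.
-/

/-- `cyc g i` is the number of `i`-cycles in the disjoint cycle decomposition of `g`
(fixed points count as `1`-cycles). -/
def cyc {m : ℕ} (g : Equiv.Perm (Fin m)) (i : ℕ) : ℕ :=
  if i = 1 then (Finset.univ.filter fun x => g x = x).card
  else Multiset.count i g.cycleType

open MvPolynomial

theorem Multiset.eq_of_sum_eq_of_count_eq_of_ne {s t : Multiset ℕ} {a : ℕ} (ha : a ≠ 0)
    (hsum : s.sum = t.sum) (hcount : ∀ i ≠ a, count i s = count i t) : s = t := by
  have hfilter : s.filter (· ≠ a) = t.filter (· ≠ a) := by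
    ext i
    by_cases hi : i = a <;> simp [hi, hcount]
  have hsum_eq (u : Multiset ℕ) : u.sum = count a u * a + (u.filter (· ≠ a)).sum := by
    conv_lhs => rw [← filter_add_not (· = a) u]
    rw [sum_add, filter_eq', sum_replicate, smul_eq_mul]
  have hcount_a : count a s = count a t := by
    have := hsum_eq s
    rw [hsum, hsum_eq t, hfilter] at this
    exact (Nat.eq_of_mul_eq_mul_right (Nat.pos_of_ne_zero ha) (by omega)).symm
  ext i
  by_cases hi : i = a
  · rw [hi, hcount_a]
  · exact hcount i hi

theorem Nat.Partition.ext_of_count_eq {n : ℕ} {p q : n.Partition}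
    (h : ∀ i, 0 < i → i < n → p.parts.count i = q.parts.count i) : p = q := by
  have hzero (r : n.Partition) (i : ℕ) (hi : i = 0 ∨ n < i) : r.parts.count i = 0 := by
    refine Multiset.count_eq_zero.mpr fun hmem => ?_
    have := r.parts_pos hmem
    have := Multiset.le_sum_of_mem hmem
    rw [r.parts_sum] at this
    omega
  rcases Nat.eq_zero_or_pos n with rfl | hn
  · exact Subsingleton.elim p q
  refine Nat.Partition.ext (Multiset.eq_of_sum_eq_of_count_eq_of_ne hn.ne'
    (by rw [p.parts_sum, q.parts_sum]) fun i hi => ?_)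
  by_cases hout : i = 0 ∨ n < i
  · rw [hzero p i hout, hzero q i hout]
  · exact h i (by omega) (by omega)

theorem cyc_eq_count_parts_partition {m : ℕ} (g : Equiv.Perm (Fin m)) (i : ℕ) :
    cyc g i = g.partition.parts.count i := by
  rw [Equiv.Perm.parts_partition, Multiset.count_add, Multiset.count_replicate, cyc]
  split_ifs with h1 h1'
  · subst h1
    rw [Multiset.count_eq_zero_of_notMem fun h => by
      have := Equiv.Perm.two_le_of_mem_cycleType h; omega]
    have := Finset.card_filter_add_card_filter_not (s := (Finset.univ : Finset (Fin m)))
      (p := fun x => g x = x)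
    rw [Finset.card_univ, Fintype.card_fin] at this
    simp only [Equiv.Perm.support, ne_eq, zero_add, Fintype.card_fin]
    omega
  · omega
  · omega
  · rfl

variable {σ K : Type*} [Field K]

theorem MvPolynomial.exists_eval_eq_one_and_eval_eq_zero (v w : σ → K) :
    ∃ P : MvPolynomial σ K, eval v P = 1 ∧ (w ≠ v → eval w P = 0) := by
  by_cases hwv : w = v
  · exact ⟨1, map_one _, fun h => absurd hwv h⟩
  obtain ⟨i, hi⟩ := Function.ne_iff.mp hwv
  refine ⟨C (v i - w i)⁻¹ * (X i - C (w i)), ?_, fun _ => ?_⟩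
  · simp [inv_mul_cancel₀ (sub_ne_zero.mpr (Ne.symm hi))]
  · simp

theorem MvPolynomial.exists_eval_eq_one_and_eval_eq_zero_on_finset (S : Finset (σ → K))
    (v : σ → K) :
    ∃ P : MvPolynomial σ K, eval v P = 1 ∧ ∀ w ∈ S, w ≠ v → eval w P = 0 := by
  choose Q hQv hQw using fun w => exists_eval_eq_one_and_eval_eq_zero v w
  refine ⟨∏ w ∈ S, Q w, ?_, fun w hw hwv => ?_⟩
  · rw [map_prod]
    exact Finset.prod_eq_one fun w _ => hQv w
  · rw [map_prod]
    exact Finset.prod_eq_zero hw (hQw w hwv)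

theorem MvPolynomial.exists_eval_eq_on_finset (S : Finset (σ → K)) (F : (σ → K) → K) :
    ∃ P : MvPolynomial σ K, ∀ v ∈ S, eval v P = F v := by
  choose Q hQv hQw using exists_eval_eq_one_and_eval_eq_zero_on_finset S
  refine ⟨∑ w ∈ S, C (F w) * Q w, fun v hv => ?_⟩
  rw [map_sum, Finset.sum_eq_single_of_mem v hv fun w _ hwv => ?_]
  · rw [map_mul, eval_C, hQv, mul_one]
  · rw [map_mul, hQw w v hv (Ne.symm hwv), mul_zero]

theorem MvPolynomial.exists_eval_comp_eq_of_factorsThrough {α : Type*} [Finite α]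
    {φ : α → σ → K} {f : α → K} (hf : f.FactorsThrough φ) :
    ∃ P : MvPolynomial σ K, ∀ a, eval (φ a) P = f a := by
  classical
  have := Fintype.ofFinite α
  obtain ⟨P, hP⟩ := exists_eval_eq_on_finset (Finset.univ.image φ) (Function.extend φ f 0)
  exact ⟨P, fun a => (hP _ (Finset.mem_image_of_mem φ (Finset.mem_univ a))).trans
    (hf.extend_apply 0 a)⟩

theorem isConj_of_cyc_eq {m : ℕ} {g h : Equiv.Perm (Fin m)}
    (H : ∀ i, 0 < i → i < m → cyc g i = cyc h i) : IsConj g h :=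
  Equiv.Perm.partition_eq_of_isConj.mpr <| Nat.Partition.ext_of_count_eq fun i hi him => by
    rw [← cyc_eq_count_parts_partition, ← cyc_eq_count_parts_partition]
    exact H i hi (by simpa using him)

/-- The variable `j : Fin (m - 1)` stands for the cycle count `X_{j+1}`. -/
theorem classFunction_is_polynomial_in_cycleCounts (m : ℕ)
    (f : Equiv.Perm (Fin m) → ℚ) (hf : ∀ g x, f (g * x * g⁻¹) = f x) :
    ∃ P : MvPolynomial (Fin (m - 1)) ℚ,
      ∀ g, MvPolynomial.eval (fun j : Fin (m - 1) => (cyc g ((j : ℕ) + 1) : ℚ)) P = f g := by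
  refine exists_eval_comp_eq_of_factorsThrough fun g h hgh => ?_
  have hconj : IsConj g h := isConj_of_cyc_eq fun i hi him => by
    have := congrFun hgh ⟨i - 1, by omega⟩
    simpa only [Nat.sub_add_cancel hi, Nat.cast_inj] using this
  obtain ⟨c, rfl⟩ := isConj_iff.mp hconj
  exact (hf c g).symm
end

section
/- If Q ∈ ℚ[X₁,...,X_N] is a polynomial such that for all sufficiently large m and all g ∈ S_m one has Q(X₁(g),...,X_N(g)) = 0, then Q is the zero polynomial. -/
open Equiv Finset

theorem MvPolynomial.eq_zero_of_eval_natCast_eq_zero {R σ : Type*} [CommRing R] [IsDomain R]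
    [CharZero R] (p : MvPolynomial σ R) (h : ∀ a : σ → ℕ, eval (fun i => (a i : R)) p = 0) :
    p = 0 :=
  funext_set (fun _ => Set.range Nat.cast) (fun _ => Set.infinite_range_of_injective
    Nat.cast_injective) fun x hx => by
    choose a ha using fun i => hx i (Set.mem_univ i)
    simpa [← _root_.funext ha] using h a

section cyc

variable {m : ℕ} (g : Perm (Fin m))

theorem cyc_one_add_sum_cycleType : cyc g 1 + g.cycleType.sum = m := by
  rw [cyc, if_pos rfl, Perm.sum_cycleType, Perm.support, card_filter_add_card_filter_not,
    card_univ, Fintype.card_fin]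

theorem cyc_of_ne_one {i : ℕ} (hi : i ≠ 1) : cyc g i = g.cycleType.count i := by
  rw [cyc, if_neg hi]

end cyc

theorem Multiset.count_sum_replicate_self {α : Type*} [DecidableEq α] (b : α → ℕ) {S : Finset α}
    {i : α} (hi : i ∈ S) :
    (∑ j ∈ S, replicate (b j) j).count i = b i := by
  simp only [count_sum', count_replicate, sum_ite_eq', if_pos hi]

theorem exists_perm_cyc_eq (b : ℕ → ℕ) (K M : ℕ) :
    ∃ m, M ≤ m ∧ ∃ g : Perm (Fin m), ∀ i, 1 ≤ i → i ≤ K → cyc g i = b i := by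
  set t := (K + 2 + M) ::ₘ ∑ i ∈ Ico 2 (K + 1), Multiset.replicate (b i) i
  have ht : ∀ i ∈ t, 2 ≤ i := by
    simp only [t, Multiset.mem_cons, Multiset.mem_sum, mem_Ico]
    rintro i (rfl | ⟨j, hj, hij⟩)
    · omega
    · exact Multiset.eq_of_mem_replicate hij ▸ hj.1
  obtain ⟨g, hg⟩ : ∃ g : Perm (Fin (b 1 + t.sum)), g.cycleType = t :=
    (Perm.exists_with_cycleType_iff _).mpr ⟨by simp, ht⟩
  refine ⟨b 1 + t.sum, ?_, g, fun i hi hiK => ?_⟩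
  · have : K + 2 + M ≤ t.sum := Multiset.le_sum_of_mem (Multiset.mem_cons_self _ _)
    omega
  rcases hi.eq_or_lt with rfl | hi
  · have := cyc_one_add_sum_cycleType g
    rw [hg] at this
    omega
  · rw [cyc_of_ne_one g hi.ne', hg, Multiset.count_cons_of_ne (by omega),
      Multiset.count_sum_replicate_self b (mem_Ico.mpr ⟨hi, by omega⟩)]

/-- If a polynomial in `X₁, …, X_N` (the variable `j : Fin N` stands for `X_{j+1}`)
vanishes on the cycle data of all permutations of all sufficiently large symmetric groups,
then it is the zero polynomial. -/
theorem eq_zero_of_eval_cycleCounts_eventually_zero (N M : ℕ) (Q : MvPolynomial (Fin N) ℚ)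
    (h : ∀ m, M ≤ m → ∀ g : Equiv.Perm (Fin m),
      MvPolynomial.eval (fun j : Fin N => (cyc g ((j : ℕ) + 1) : ℚ)) Q = 0) :
    Q = 0 := by
  refine Q.eq_zero_of_eval_natCast_eq_zero fun a => ?_
  have hsucc : Function.Injective fun j : Fin N => (j : ℕ) + 1 :=
    Nat.succ_injective.comp Fin.val_injective
  obtain ⟨m, hm, g, hg⟩ := exists_perm_cyc_eq (Function.extend (fun j : Fin N => (j : ℕ) + 1) a 0)
    N M
  have hcyc (j : Fin N) : cyc g (j + 1) = a j := by
    rw [hg _ (by omega) (by omega), hsucc.extend_apply]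
  simpa only [hcyc] using h m hm g
end

section
/- For every ℓ ≥ 1, every m ≥ 1, and every g ∈ S_m, the number of ℓ-cycles γ of [1,m] fixed by the conjugation/coordinatewise action of g equals ∑_{d·e = ℓ} φ(d)·(dᵉ/ℓ)·X_d(g)(X_d(g)−1)⋯(X_d(g)−e+1), where φ is Euler's totient function. -/
/-- Injective `ℓ`-tuples of elements of `Fin m`. -/
def Tup (ℓ m : ℕ) : Type := {f : Fin ℓ → Fin m // Function.Injective f}

/-- Two injective tuples are related iff one is a cyclic rotation of the other. -/
def cycRel (ℓ m : ℕ) [NeZero ℓ] (a b : Tup ℓ m) : Prop :=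
  ∃ k : Fin ℓ, ∀ i, b.1 i = a.1 (i + k)

/-- The set `Γ_ℓ^m` of `ℓ`-cycles of `[1, m]`: injective `ℓ`-tuples of elements
of `{1, …, m}` modulo cyclic rotation. -/
def Cyc (ℓ m : ℕ) [NeZero ℓ] : Type := Quot (cycRel ℓ m)

/-- The coordinatewise action of `S_m` on the set of `ℓ`-cycles of `[1, m]`. -/
def act {ℓ m : ℕ} [NeZero ℓ] (g : Equiv.Perm (Fin m)) : Cyc ℓ m → Cyc ℓ m :=
  Quot.map (fun f => ⟨g ∘ f.1, (Equiv.injective g).comp f.2⟩)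
    (by rintro a b ⟨k, hk⟩; exact ⟨k, fun i => congrArg g (hk i)⟩)

/-!
Rotation acts freely on injective tuples, so `ℓ` times the number of fixed `ℓ`-cycles counts the
tuples `f` with `g ∘ f = f ∘ (· + k)` for some `k : Fin ℓ`, which is then unique. If `k` has
additive order `d`, the translation by `k` has `ℓ / d` cycles, all of length `d`, and an injective
map intertwining it with `g` amounts to choosing, for each of these cycles, a point on a `d`-cycle
of `g`, distinct cycles going to distinct `d`-cycles: `X_d(g)(X_d(g) - 1)⋯(X_d(g) - ℓ/d + 1)`
choices for the cycles and `d` for the point on each. Finally, `Fin ℓ` is cyclic, so exactly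
`φ(d)` of the `k` have order `d`.
-/

open Equiv Equiv.Perm Function Finset

section FiberCounting

variable {ι β γ : Type*} {d : ℕ}

theorem Nat.card_eq_card_mul_of_card_fiber [Finite β] [Finite γ] (q : β → γ)
    (hq : ∀ c, Nat.card {b // q b = c} = d) : Nat.card β = Nat.card γ * d := by
  have := Fintype.ofFinite γ
  rw [← Nat.card_congr (Equiv.sigmaFiberEquiv q), Nat.card_sigma]
  simp [hq, Nat.card_eq_fintype_card]

theorem Nat.card_subtype_comp_eq_mul [Finite β] [Finite γ] (q : β → γ)
    (hq : ∀ c, Nat.card {b // q b = c} = d) (p : γ → Prop) :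
    Nat.card {b // p (q b)} = Nat.card {c // p c} * d := by
  classical
  have := Fintype.ofFinite γ
  rw [← Nat.card_congr (Equiv.sigmaSubtypeFiberEquivSubtype q fun _ => Iff.rfl), Nat.card_sigma]
  simp [hq, Nat.card_eq_fintype_card]

theorem Nat.card_injective_comp [Finite ι] [Finite β] [Finite γ] (q : β → γ)
    (hq : ∀ c, Nat.card {b // q b = c} = d) :
    Nat.card {h : ι → β // Injective (q ∘ h)} =
      (Nat.card γ).descFactorial (Nat.card ι) * d ^ Nat.card ι := by
  have := Fintype.ofFinite ι
  have := Fintype.ofFinite γ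
  have hfiber (v : {v : ι → γ // Injective v}) :
      Nat.card {h : {h : ι → β // Injective (q ∘ h)} //
        (⟨q ∘ h.1, h.2⟩ : {v : ι → γ // Injective v}) = v} = d ^ Nat.card ι := by
    calc _ = Nat.card {h : ι → β // ∀ i, q (h i) = v.1 i} :=
          Nat.card_congr <| (Equiv.subtypeEquivRight fun h => by
              simp [Subtype.ext_iff, funext_iff]).trans
            (Equiv.subtypeSubtypeEquivSubtype fun {h} hh => (funext hh : q ∘ h = v.1) ▸ v.2)
      _ = ∏ i, Nat.card {b // q b = v.1 i} :=
          (Nat.card_congr (Equiv.subtypePiEquivPi (p := fun i b => q b = v.1 i))).trans Nat.card_pi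
      _ = d ^ Nat.card ι := by simp [hq]
  rw [Nat.card_eq_card_mul_of_card_fiber _ hfiber,
    Nat.card_congr (Equiv.subtypeInjectiveEquivEmbedding ι γ), Nat.card_eq_fintype_card,
    Fintype.card_embedding_eq, Nat.card_eq_fintype_card, Nat.card_eq_fintype_card]

theorem Nat.card_subtype_exists_eq_sum [Fintype ι] [Finite β] (P : ι → β → Prop)
    (hP : ∀ b i j, P i b → P j b → i = j) :
    Nat.card {b // ∃ i, P i b} = ∑ i, Nat.card {b // P i b} := by
  rw [← Nat.card_sigma]
  refine (Nat.card_eq_of_bijective (fun s : Σ i, {b // P i b} => ⟨s.2.1, s.1, s.2.2⟩)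
    ⟨?_, fun b => ?_⟩).symm
  · rintro ⟨i, b, hi⟩ ⟨j, b', hj⟩ h
    obtain rfl : b = b' := congrArg Subtype.val h
    obtain rfl := hP b i j hi hj
    rfl
  · obtain ⟨b, i, hi⟩ := b
    exact ⟨⟨i, b, hi⟩, rfl⟩

end FiberCounting

namespace Equiv.Perm

section CyclesOfLength

variable {α : Type*} (g : Perm α)

/-- The cycles of `g` of length `d`; unlike in `cycleType`, fixed points are the cycles of
length `1`. -/
def cyclesOfLength (d : ℕ) : Type _ :=
  Quotient ((SameCycle.setoid g).comap ((↑) : {x // minimalPeriod g x = d} → α))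

variable {g} {d : ℕ}

def cyclesOfLength.mk (x : {x // minimalPeriod g x = d}) : g.cyclesOfLength d := Quotient.mk _ x

theorem cyclesOfLength.mk_eq_mk_iff {x y : {x // minimalPeriod g x = d}} :
    mk x = mk y ↔ SameCycle g x y :=
  Quotient.eq

noncomputable def cyclesOfLength.rep (c : g.cyclesOfLength d) : α :=
  (Quotient.out c : {x // minimalPeriod g x = d}).1

theorem cyclesOfLength.minimalPeriod_rep (c : g.cyclesOfLength d) :
    minimalPeriod g c.rep = d :=
  (Quotient.out c : {x // minimalPeriod g x = d}).2

theorem sameCycle_of_pow_apply_eq_pow_apply {x y : α} {n n' : ℕ} (h : (g ^ n) x = (g ^ n') y) :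
    SameCycle g x y :=
  sameCycle_pow_left.1 <| sameCycle_pow_right.1
    (h ▸ SameCycle.refl g ((g ^ n) x) : SameCycle g ((g ^ n) x) ((g ^ n') y))

variable [Finite α]

instance : Finite (g.cyclesOfLength d) := Quotient.finite _

theorem pow_apply_eq_pow_apply_iff {x : α} {a b : ℕ} :
    (g ^ a) x = (g ^ b) x ↔ a ≡ b [MOD minimalPeriod g x] := by
  have hpos := minimalPeriod_pos_of_mem_periodicPts (g.injective.mem_periodicPts x)
  rw [← iterate_eq_pow, ← iterate_eq_pow, ← iterate_mod_minimalPeriod_eq,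
    ← iterate_mod_minimalPeriod_eq (n := b),
    iterate_eq_iterate_iff_of_lt_minimalPeriod (Nat.mod_lt _ hpos) (Nat.mod_lt _ hpos)]
  rfl

theorem SameCycle.minimalPeriod_eq {x y : α} (h : SameCycle g x y) :
    minimalPeriod g x = minimalPeriod g y := by
  obtain ⟨n, -, rfl⟩ := h.exists_pow_eq'
  rw [← iterate_eq_pow, minimalPeriod_apply_iterate (g.injective.mem_periodicPts x)]

theorem card_sameCycle (x : α) : Nat.card {y // SameCycle g x y} = minimalPeriod g x := by
  have hpos := minimalPeriod_pos_of_mem_periodicPts (g.injective.mem_periodicPts x)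
  rw [← Nat.card_fin (minimalPeriod g x)]
  refine (Nat.card_eq_of_bijective (fun n : Fin (minimalPeriod g x) =>
    (⟨(g ^ (n : ℕ)) x, sameCycle_pow_right.2 (SameCycle.refl g x)⟩ : {y // SameCycle g x y}))
    ⟨fun a b h => ?_, ?_⟩).symm
  · exact Fin.ext ((pow_apply_eq_pow_apply_iff.1 (congrArg Subtype.val h)).eq_of_lt_of_lt a.2 b.2)
  · rintro ⟨y, hy⟩
    obtain ⟨n, -, rfl⟩ := hy.exists_pow_eq'
    exact ⟨⟨n % _, Nat.mod_lt _ hpos⟩,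
      Subtype.ext (pow_apply_eq_pow_apply_iff.2 (Nat.mod_modEq _ _))⟩

theorem cyclesOfLength.card_fiber (c : g.cyclesOfLength d) :
    Nat.card {x // mk x = c} = d := by
  induction c using Quotient.inductionOn with | h x₀ => ?_
  calc _ = Nat.card {y // SameCycle g x₀ y} := Nat.card_congr
        { toFun x := ⟨x.1, (mk_eq_mk_iff.1 x.2).symm⟩
          invFun y :=
            ⟨⟨y, y.2.minimalPeriod_eq.symm.trans x₀.2⟩, mk_eq_mk_iff.2 y.2.symm⟩ }
    _ = d := (card_sameCycle x₀.1).trans x₀.2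

theorem cyclesOfLength.exists_pow_rep (x : {x // minimalPeriod g x = d}) :
    ∃ n : ℕ, (g ^ n) (mk x).rep = x := by
  have hx : SameCycle g (mk x).rep x := Quotient.mk_out (s := (SameCycle.setoid g).comap _) x
  obtain ⟨n, -, hn⟩ := hx.exists_pow_eq'
  exact ⟨n, hn⟩

theorem cyclesOfLength.pow_rep_eq_pow_rep_iff {c c' : g.cyclesOfLength d} {n n' : ℕ} :
    (g ^ n) c.rep = (g ^ n') c'.rep ↔ c = c' ∧ n ≡ n' [MOD d] := by
  refine ⟨fun h => ?_, fun ⟨hc, hn⟩ => ?_⟩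
  · obtain rfl : c = c' := Quotient.out_equiv_out.1 (sameCycle_of_pow_apply_eq_pow_apply h)
    exact ⟨rfl, c.minimalPeriod_rep ▸ pow_apply_eq_pow_apply_iff.1 h⟩
  · subst hc
    rwa [pow_apply_eq_pow_apply_iff, c.minimalPeriod_rep]

theorem card_eq_card_cyclesOfLength_mul (hg : ∀ x, minimalPeriod g x = d) :
    Nat.card α = Nat.card (g.cyclesOfLength d) * d := by
  rw [← Nat.card_congr (Equiv.subtypeUnivEquiv hg)]
  exact Nat.card_eq_card_mul_of_card_fiber _ cyclesOfLength.card_fiber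

end CyclesOfLength

section CycleType

variable {α : Type*} [Fintype α] [DecidableEq α] (g : Perm α)

theorem card_support_cycleOf {x : α} (hx : g x ≠ x) :
    #(g.cycleOf x).support = minimalPeriod g x := by
  rw [← card_sameCycle, ← Nat.card_eq_finsetCard]
  exact Nat.card_congr (Equiv.subtypeEquivRight fun _ => mem_support_cycleOf_iff' hx)

theorem card_cyclesOfLength_one : Nat.card (g.cyclesOfLength 1) = #{x | g x = x} := by
  have hmk : Bijective (cyclesOfLength.mk : {x // minimalPeriod g x = 1} → _) :=
    ⟨fun x y h => Subtype.ext ((cyclesOfLength.mk_eq_mk_iff.1 h).eq_of_left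
      (minimalPeriod_eq_one_iff_isFixedPt.1 x.2)), Quotient.mk_surjective⟩
  rw [← Nat.card_eq_of_bijective _ hmk, ← Fintype.card_subtype, ← Nat.card_eq_fintype_card]
  exact Nat.card_congr (Equiv.subtypeEquivRight fun _ => minimalPeriod_eq_one_iff_isFixedPt)

theorem card_cyclesOfLength_of_ne_one {d : ℕ} (hd : d ≠ 1) :
    Nat.card (g.cyclesOfLength d) = g.cycleType.count d := by
  have hmoved (x : {x // minimalPeriod g x = d}) : g x ≠ x := fun h =>
    hd (x.2 ▸ minimalPeriod_eq_one_iff_isFixedPt.2 h)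
  let toCycle : g.cyclesOfLength d → {c : g.cycleFactorsFinset // #(c : Perm α).support = d} :=
    Quotient.lift (fun x => ⟨⟨g.cycleOf x, cycleOf_mem_cycleFactorsFinset_iff.2
        (mem_support.2 (hmoved x))⟩, (card_support_cycleOf g (hmoved x)).trans x.2⟩)
      fun x y hxy => Subtype.ext (Subtype.ext (SameCycle.cycleOf_eq hxy))
  rw [CycleType.count_def, ← Nat.card_eq_fintype_card]
  refine Nat.card_eq_of_bijective toCycle ⟨fun c c' h => ?_, fun ⟨⟨c, hc⟩, hcd⟩ => ?_⟩
  · induction c using Quotient.inductionOn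
    induction c' using Quotient.inductionOn
    exact Quotient.sound ((sameCycle_iff_cycleOf_eq_of_mem_support (mem_support.2 (hmoved _))
      (mem_support.2 (hmoved _))).2 (congrArg Subtype.val (congrArg Subtype.val h)))
  · obtain ⟨x, hx⟩ := (mem_cycleFactorsFinset_iff.1 hc).1.nonempty_support
    have hcx := cycle_is_cycleOf hx hc
    have hgx : g x ≠ x := by
      rw [← (mem_cycleFactorsFinset_iff.1 hc).2 x hx]; exact mem_support.1 hx
    exact ⟨cyclesOfLength.mk ⟨x, (card_support_cycleOf g hgx).symm.trans (hcx ▸ hcd)⟩,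
      Subtype.ext (Subtype.ext hcx.symm)⟩

end CycleType

end Equiv.Perm

theorem card_cyclesOfLength_eq_cyc {m : ℕ} (g : Perm (Fin m)) (d : ℕ) :
    Nat.card (g.cyclesOfLength d) = cyc g d := by
  unfold cyc
  split_ifs with hd
  · subst hd
    exact card_cyclesOfLength_one g
  · exact card_cyclesOfLength_of_ne_one g hd

section Semiconj

variable {α β : Type*} {σ : Perm β} {g : Perm α} {f : β → α}

theorem Function.Semiconj.perm_pow_apply (h : Semiconj f σ g) (n : ℕ) (y : β) :
    f ((σ ^ n) y) = (g ^ n) (f y) := by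
  rw [← iterate_eq_pow, ← iterate_eq_pow]
  exact h.iterate_right n y

theorem Function.Semiconj.minimalPeriod_apply (h : Semiconj f σ g) (hf : Injective f) (y : β) :
    minimalPeriod g (f y) = minimalPeriod σ y :=
  minimalPeriod_eq_minimalPeriod_iff.2 fun n => by
    simp only [IsPeriodicPt, IsFixedPt, ← h.iterate_right n y, hf.eq_iff]

theorem Function.Semiconj.sameCycle_apply_iff [Finite α] [Finite β] (h : Semiconj f σ g)
    (hf : Injective f) {x y : β} : SameCycle g (f x) (f y) ↔ SameCycle σ x y := by
  refine ⟨fun hxy => ?_, fun hxy => ?_⟩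
  · obtain ⟨n, -, hn⟩ := hxy.exists_pow_eq'
    rw [← h.perm_pow_apply] at hn
    exact ⟨n, by rw [zpow_natCast, hf hn]⟩
  · obtain ⟨n, -, rfl⟩ := hxy.exists_pow_eq'
    exact ⟨n, by rw [zpow_natCast, h.perm_pow_apply]⟩

end Semiconj

namespace Equiv.Perm

variable {α β : Type*} [Finite α] [Finite β] {σ : Perm β} {g : Perm α} {d : ℕ}

theorem exists_cycle_pow_rep_eq (hσ : ∀ y, minimalPeriod σ y = d) (y : β) :
    ∃ p : σ.cyclesOfLength d × ℕ, (σ ^ p.2) p.1.rep = y :=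
  let ⟨n, hn⟩ := cyclesOfLength.exists_pow_rep ⟨y, hσ y⟩
  ⟨(_, n), hn⟩

noncomputable def equivariantExtension (hσ : ∀ y, minimalPeriod σ y = d)
    (h : σ.cyclesOfLength d → {x : α // minimalPeriod g x = d}) (y : β) : α :=
  (g ^ (exists_cycle_pow_rep_eq hσ y).choose.2) (h (exists_cycle_pow_rep_eq hσ y).choose.1)

section Extension

variable (hσ : ∀ y, minimalPeriod σ y = d)
  (h : σ.cyclesOfLength d → {x : α // minimalPeriod g x = d})

theorem equivariantExtension_pow_rep (c : σ.cyclesOfLength d) (n : ℕ) :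
    equivariantExtension hσ h ((σ ^ n) c.rep) = (g ^ n) (h c) := by
  have hp := (exists_cycle_pow_rep_eq hσ ((σ ^ n) c.rep)).choose_spec
  unfold equivariantExtension
  generalize (exists_cycle_pow_rep_eq hσ ((σ ^ n) c.rep)).choose = p at hp ⊢
  obtain ⟨rfl, hmod⟩ := cyclesOfLength.pow_rep_eq_pow_rep_iff.1 hp
  rwa [pow_apply_eq_pow_apply_iff, (h p.1).2]

theorem semiconj_equivariantExtension : Semiconj (equivariantExtension hσ h) σ g := by
  intro y
  obtain ⟨⟨c, n⟩, rfl⟩ := exists_cycle_pow_rep_eq hσ y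
  rw [← mul_apply, ← pow_succ', equivariantExtension_pow_rep, equivariantExtension_pow_rep,
    pow_succ', mul_apply]

theorem injective_equivariantExtension
    (hh : Injective (cyclesOfLength.mk ∘ h)) : Injective (equivariantExtension hσ h) := by
  intro y y' hyy'
  obtain ⟨⟨c, n⟩, rfl⟩ := exists_cycle_pow_rep_eq hσ y
  obtain ⟨⟨c', n'⟩, rfl⟩ := exists_cycle_pow_rep_eq hσ y'
  rw [equivariantExtension_pow_rep, equivariantExtension_pow_rep] at hyy'
  obtain rfl : c = c' :=
    hh (cyclesOfLength.mk_eq_mk_iff.2 (sameCycle_of_pow_apply_eq_pow_apply hyy'))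
  rw [pow_apply_eq_pow_apply_iff, (h c).2] at hyy'
  exact cyclesOfLength.pow_rep_eq_pow_rep_iff.2 ⟨rfl, hyy'⟩

end Extension

theorem injective_mk_comp_apply_rep {f : β → α} (hf : Injective f) (hfσ : Semiconj f σ g) :
    Injective fun c : σ.cyclesOfLength d => cyclesOfLength.mk
      (⟨f c.rep, (hfσ.minimalPeriod_apply hf _).trans c.minimalPeriod_rep⟩ :
        {x // minimalPeriod g x = d}) := fun _ _ h =>
  Quotient.out_equiv_out.1 ((hfσ.sameCycle_apply_iff hf).1 (cyclesOfLength.mk_eq_mk_iff.1 h))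

theorem card_injective_semiconj (hσ : ∀ y, minimalPeriod σ y = d) :
    Nat.card {f : β → α // Injective f ∧ Semiconj f σ g} =
      (Nat.card (g.cyclesOfLength d)).descFactorial (Nat.card (σ.cyclesOfLength d)) *
        d ^ Nat.card (σ.cyclesOfLength d) := by
  rw [← Nat.card_injective_comp cyclesOfLength.mk cyclesOfLength.card_fiber]
  refine Nat.card_eq_of_bijective (fun f => ⟨fun c => ⟨f.1 c.rep, _⟩,
    injective_mk_comp_apply_rep f.2.1 f.2.2⟩) ⟨?_, fun h => ?_⟩
  · rintro ⟨f, _, hfσ⟩ ⟨f', _, hf'σ⟩ hff'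
    have hrep (c : σ.cyclesOfLength d) : f c.rep = f' c.rep :=
      congrArg (fun h => (h.1 c).1) hff'
    refine Subtype.ext (funext fun y => ?_)
    obtain ⟨⟨c, n⟩, rfl⟩ := exists_cycle_pow_rep_eq hσ y
    show f ((σ ^ n) c.rep) = f' ((σ ^ n) c.rep)
    rw [hfσ.perm_pow_apply, hf'σ.perm_pow_apply, hrep]
  · refine ⟨⟨equivariantExtension hσ h.1, injective_equivariantExtension hσ h.1 h.2,
      semiconj_equivariantExtension hσ h.1⟩, Subtype.ext (funext fun c => Subtype.ext ?_)⟩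
    simpa using equivariantExtension_pow_rep hσ h.1 c 0

end Equiv.Perm

section CyclicGroup

variable {G : Type*} [AddGroup G]

theorem minimalPeriod_addRight (k x : G) :
    minimalPeriod (Equiv.addRight k) x = addOrderOf k := by
  refine Nat.dvd_right_iff_eq.1 fun n => ?_
  rw [← isPeriodicPt_iff_minimalPeriod_dvd, addOrderOf_dvd_iff_nsmul_eq_zero, IsPeriodicPt,
    IsFixedPt, coe_addRight, add_right_iterate_apply, add_eq_left]

theorem card_cyclesOfLength_addRight [Finite G] (k : G) :
    Nat.card ((Equiv.addRight k).cyclesOfLength (addOrderOf k)) = Nat.card G / addOrderOf k := by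
  rw [card_eq_card_cyclesOfLength_mul (minimalPeriod_addRight k),
    Nat.mul_div_cancel _ (addOrderOf_pos k)]

theorem IsAddCyclic.sum_apply_addOrderOf [Fintype G] [IsAddCyclic G] {M : Type*}
    [AddCommMonoid M] (F : ℕ → M) :
    ∑ x : G, F (addOrderOf x) = ∑ d ∈ (Fintype.card G).divisors, d.totient • F d := by
  classical
  rw [← sum_fiberwise_of_maps_to (g := addOrderOf) (t := (Fintype.card G).divisors)
    fun x _ => Nat.mem_divisors.2 ⟨addOrderOf_dvd_card, Fintype.card_ne_zero⟩]
  refine sum_congr rfl fun d hd => ?_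
  rw [sum_congr rfl fun x hx => by rw [(mem_filter.1 hx).2], sum_const,
    IsAddCyclic.card_addOrderOf_eq_totient (Nat.dvd_of_mem_divisors hd)]

end CyclicGroup

instance (n : ℕ) [NeZero n] : IsAddCyclic (Fin n) :=
  isAddCyclic_of_surjective (ZMod.finEquiv n).symm (ZMod.finEquiv n).symm.surjective

section Rotations

variable {ℓ m : ℕ} [NeZero ℓ]

instance : Finite (Tup ℓ m) := inferInstanceAs (Finite {f : Fin ℓ → Fin m // Injective f})

instance : Finite (Cyc ℓ m) := Quot.finite _

theorem cycRel_equivalence : Equivalence (cycRel ℓ m) where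
  refl _ := ⟨0, fun i => by rw [add_zero]⟩
  symm := fun ⟨k, hk⟩ => ⟨-k, fun i => by rw [hk, neg_add_cancel_right]⟩
  trans := fun ⟨k, hk⟩ ⟨k', hk'⟩ => ⟨k' + k, fun i => by rw [hk', hk, add_assoc]⟩

theorem Cyc.mk_eq_mk_iff {a b : Tup ℓ m} :
    (Quot.mk _ a : Cyc ℓ m) = Quot.mk _ b ↔ cycRel ℓ m a b :=
  Quot.eq.trans cycRel_equivalence.eqvGen_iff

def Tup.rotate (f : Tup ℓ m) (k : Fin ℓ) : Tup ℓ m :=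
  ⟨fun i => f.1 (i + k), f.2.comp (add_left_injective k)⟩

theorem Cyc.card_fiber_mk (c : Cyc ℓ m) : Nat.card {f : Tup ℓ m // Quot.mk _ f = c} = ℓ := by
  induction c using Quot.ind with | mk f₀ => ?_
  refine (Nat.card_eq_of_bijective (fun k : Fin ℓ => ⟨f₀.rotate k,
    (Cyc.mk_eq_mk_iff.2 ⟨k, fun _ => rfl⟩).symm⟩)
    ⟨fun k k' h => ?_, fun ⟨f, hf⟩ => ?_⟩).symm.trans (Nat.card_fin ℓ)
  · simpa using f₀.2 (congrArg (fun f => f.1.1 0) h)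
  · obtain ⟨k, hk⟩ := Cyc.mk_eq_mk_iff.1 hf.symm
    exact ⟨k, Subtype.ext (Subtype.ext (funext fun i => (hk i).symm))⟩

variable (g : Perm (Fin m))

theorem act_mk_eq_mk_iff (f : Tup ℓ m) :
    act g (Quot.mk _ f) = Quot.mk _ f ↔ ∃ k, ∀ i, g (f.1 i) = f.1 (i + k) :=
  eq_comm.trans Cyc.mk_eq_mk_iff

theorem card_fixed_act_mul :
    Nat.card {c : Cyc ℓ m // act g c = c} * ℓ =
      Nat.card {f : Tup ℓ m // ∃ k : Fin ℓ, ∀ i, g (f.1 i) = f.1 (i + k)} := by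
  rw [← Nat.card_subtype_comp_eq_mul _ Cyc.card_fiber_mk fun c => act g c = c]
  exact Nat.card_congr (Equiv.subtypeEquivRight (act_mk_eq_mk_iff g))

theorem card_exists_rotation_eq_sum :
    Nat.card {f : Tup ℓ m // ∃ k : Fin ℓ, ∀ i, g (f.1 i) = f.1 (i + k)} =
      ∑ k : Fin ℓ, Nat.card {f : Tup ℓ m // ∀ i, g (f.1 i) = f.1 (i + k)} :=
  Nat.card_subtype_exists_eq_sum _ fun f k k' hk hk' => by
    simpa using f.2 ((hk 0).symm.trans (hk' 0))

theorem card_rotation_equivariant (k : Fin ℓ) :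
    Nat.card {f : Tup ℓ m // ∀ i, g (f.1 i) = f.1 (i + k)} =
      (cyc g (addOrderOf k)).descFactorial (ℓ / addOrderOf k) *
        addOrderOf k ^ (ℓ / addOrderOf k) := by
  have hcycles := card_cyclesOfLength_addRight k
  rw [Nat.card_fin] at hcycles
  rw [← card_cyclesOfLength_eq_cyc, ← hcycles,
    ← card_injective_semiconj (minimalPeriod_addRight k)]
  exact Nat.card_congr ((Equiv.subtypeSubtypeEquivSubtypeInter Injective
      fun f : Fin ℓ → Fin m => ∀ i, g (f i) = f (i + k)).trans
    (Equiv.subtypeEquivRight fun f => and_congr_right fun _ => forall_congr' fun i => eq_comm))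

end Rotations

theorem card_fixed_cyc_general (ℓ m : ℕ) [NeZero ℓ] (g : Equiv.Perm (Fin m)) :
    ℓ * Nat.card {x : Cyc ℓ m // act g x = x} =
      ∑ d ∈ ℓ.divisors, Nat.totient d * d ^ (ℓ / d) * Nat.descFactorial (cyc g d) (ℓ / d) := by
  rw [mul_comm, card_fixed_act_mul, card_exists_rotation_eq_sum]
  simp_rw [card_rotation_equivariant]
  rw [IsAddCyclic.sum_apply_addOrderOf (fun d => (cyc g d).descFactorial (ℓ / d) * d ^ (ℓ / d)),
    Fintype.card_fin]
  refine sum_congr rfl fun d _ => ?_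
  rw [smul_eq_mul]
  ring

/-- The number of `ℓ`-cycles of `[1, m]` fixed by `g ∈ S_m` is
`∑_{d·e = ℓ} φ(d) (dᵉ/ℓ) X_d(g)(X_d(g)−1)⋯(X_d(g)−e+1)`. -/
theorem card_fixed_cyc (ℓ m : ℕ) [NeZero ℓ] (hm : 0 < m) (g : Equiv.Perm (Fin m)) :
    ℓ * Nat.card {x : Cyc ℓ m // act g x = x} =
      ∑ d ∈ ℓ.divisors, Nat.totient d * d ^ (ℓ / d) * Nat.descFactorial (cyc g d) (ℓ / d) :=
  card_fixed_cyc_general ℓ m g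
end

section
/- Let ν ⊢ n be a partition and μ ⊢ m (m ≥ n) a partition occurring in Ind_{S_n × S_{m−n}}^{S_m}(V_ν ⊠ ℚ_{m−n}) (i.e., μ/ν is a horizontal strip). Then the weight of μ (the size of μ minus its first part) satisfies w(ν) ≤ w(μ) ≤ |ν|; moreover w(μ) = w(ν) iff μ is obtained by adding all m−n boxes to the first row, and w(μ) = |ν| iff m ≥ |ν| + ν₁ and μ = ν[m]. -/
/-!
Write `w(λ) = λ₂ + λ₃ + ⋯` as the sum of the shifted sequence `i ↦ λ (i + 1)`. The horizontal
strip condition `ν (i + 1) ≤ μ (i + 1) ≤ ν i` compares these sequences termwise, so summing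
gives `w(ν) ≤ w(μ) ≤ |ν|`. Equality of termwise comparable sums forces termwise equality:
`μ (i + 1) = ν (i + 1)` for all `i` in the first case, `μ (i + 1) = ν i` in the second, which
are the two extremal shapes.
-/

open Finset

section SumRange

variable {M : Type*} [AddCommMonoid M]

theorem sum_range_eq_of_forall_ge_eq_zero {f : ℕ → M} {N K : ℕ} (hNK : N ≤ K)
    (hf : ∀ i, N ≤ i → f i = 0) : ∑ i ∈ range K, f i = ∑ i ∈ range N, f i :=
  (sum_subset (range_subset_range.mpr hNK) fun i _ hi => hf i (by simpa using hi)).symm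

theorem sum_range_shift_add_head {f : ℕ → M} {N : ℕ} (hN : f N = 0) :
    ∑ i ∈ range N, f (i + 1) + f 0 = ∑ i ∈ range N, f i := by
  rw [← sum_range_succ', sum_range_succ, hN, add_zero]

theorem sum_range_eq_iff_eq_of_le [PartialOrder M] [IsOrderedCancelAddMonoid M]
    {f g : ℕ → M} {N : ℕ} (hfg : ∀ i, f i ≤ g i)
    (hf : ∀ i, N ≤ i → f i = 0) (hg : ∀ i, N ≤ i → g i = 0) :
    ∑ i ∈ range N, f i = ∑ i ∈ range N, g i ↔ f = g := by
  rw [sum_eq_sum_iff_of_le fun i _ => hfg i]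
  refine ⟨fun h => funext fun i => ?_, fun h i _ => congrFun h i⟩
  rcases lt_or_ge i N with hi | hi
  · exact h i (mem_range.mpr hi)
  · rw [hf i hi, hg i hi]

end SumRange

theorem weight_bounds_of_horizontal_strip_general (n m : ℕ) (hnm : n ≤ m) (ν μ : ℕ → ℕ)
    (hμ : Antitone μ)
    (hν0 : ∀ i, n ≤ i → ν i = 0) (hμ0 : ∀ i, m ≤ i → μ i = 0)
    (hνsum : ∑ i ∈ Finset.range n, ν i = n) (hμsum : ∑ i ∈ Finset.range m, μ i = m)
    (hsub : ∀ i, ν i ≤ μ i) (hstrip : ∀ i, μ (i + 1) ≤ ν i) :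
    (n - ν 0 ≤ m - μ 0 ∧ m - μ 0 ≤ n) ∧
      (m - μ 0 = n - ν 0 ↔ μ 0 = ν 0 + (m - n) ∧ ∀ i, 1 ≤ i → μ i = ν i) ∧
      (m - μ 0 = n ↔ n + ν 0 ≤ m ∧ μ 0 = m - n ∧ ∀ i, μ (i + 1) = ν i) := by
  have hνm : ∀ i, m ≤ i → ν i = 0 := fun i hi => hν0 i (hnm.trans hi)
  have hνsum' : ∑ i ∈ range m, ν i = n := (sum_range_eq_of_forall_ge_eq_zero hnm hν0).trans hνsum
  have hμsplit := sum_range_shift_add_head (hμ0 m le_rfl)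
  have hνsplit := sum_range_shift_add_head (hνm m le_rfl)
  have hlower : ∑ i ∈ range m, ν (i + 1) ≤ ∑ i ∈ range m, μ (i + 1) :=
    sum_le_sum fun i _ => hsub (i + 1)
  have hupper : ∑ i ∈ range m, μ (i + 1) ≤ ∑ i ∈ range m, ν i := sum_le_sum fun i _ => hstrip i
  have hlower_eq := sum_range_eq_iff_eq_of_le (N := m) (fun i => hsub (i + 1))
    (fun i hi => hνm _ (by omega)) (fun i hi => hμ0 _ (by omega))
  have hupper_eq := sum_range_eq_iff_eq_of_le (N := m) hstrip
    (fun i hi => hμ0 _ (by omega)) hνm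
  refine ⟨by omega, ⟨fun h => ?_, fun ⟨h0, hi⟩ => ?_⟩, ⟨fun h => ?_, fun ⟨_, h0, hi⟩ => ?_⟩⟩
  · have htail := hlower_eq.mp (by omega)
    refine ⟨by omega, fun i hi => ?_⟩
    obtain ⟨j, rfl⟩ := Nat.exists_eq_add_of_le' hi
    exact (congrFun htail j).symm
  · have := hlower_eq.mpr (funext fun i => (hi (i + 1) (by omega)).symm)
    omega
  · have htail := hupper_eq.mp (by omega)
    have hμ10 : μ 1 ≤ μ 0 := hμ zero_le_one
    have hμ1 : μ 1 = ν 0 := congrFun htail 0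
    exact ⟨by omega, by omega, congrFun htail⟩
  · have := hupper_eq.mpr (funext hi)
    omega

/-- Let `ν ⊢ n` and `μ ⊢ m` (partitions written as antitone functions `ℕ → ℕ`, indexed from
`0`, with finitely many nonzero parts) with `μ/ν` a horizontal strip (`ν i ≤ μ i` and
`μ (i+1) ≤ ν i`, i.e. `μ` occurs in `Ind_{S_n × S_{m−n}}^{S_m}(V_ν ⊠ ℚ_{m−n})`).
Writing `w(μ) = |μ| − μ₁` for the weight, we have `w(ν) ≤ w(μ) ≤ |ν|`; moreover
`w(μ) = w(ν)` iff `μ` is obtained from `ν` by adding all `m − n` boxes to the first row, and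
`w(μ) = |ν|` iff `m ≥ |ν| + ν₁` and `μ = ν[m] = (m − |ν|, ν₁, ν₂, …)`. -/
theorem weight_bounds_of_horizontal_strip (n m : ℕ) (hnm : n ≤ m) (ν μ : ℕ → ℕ)
    (hν : Antitone ν) (hμ : Antitone μ)
    (hν0 : ∀ i, n ≤ i → ν i = 0) (hμ0 : ∀ i, m ≤ i → μ i = 0)
    (hνsum : ∑ i ∈ Finset.range n, ν i = n) (hμsum : ∑ i ∈ Finset.range m, μ i = m)
    (hsub : ∀ i, ν i ≤ μ i) (hstrip : ∀ i, μ (i + 1) ≤ ν i) :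
    (n - ν 0 ≤ m - μ 0 ∧ m - μ 0 ≤ n) ∧
      (m - μ 0 = n - ν 0 ↔ μ 0 = ν 0 + (m - n) ∧ ∀ i, 1 ≤ i → μ i = ν i) ∧
      (m - μ 0 = n ↔ n + ν 0 ≤ m ∧ μ 0 = m - n ∧ ∀ i, μ (i + 1) = ν i) :=
  weight_bounds_of_horizontal_strip_general n m hnm ν μ hμ hν0 hμ0 hνsum hμsum hsub hstrip
end
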